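/- The span of the 2k+1 vectors |η_ℓ^j⟩ is invariant under U_α, and in this basis U_α acts by the (2k+1)×(2k+1) matrix u_α with entries ⟨ℓ′,j′|u_α|ℓ,j⟩ = (−1)^j (1 − 2(k−ℓ)/(N−r)) δ_{ℓℓ′} δ_{jj′} + 2 √((k−ℓ)/(N−r)) √(1 − (k−ℓ)/(N−r)) δ_{ℓℓ′} δ_{j⊕1, j′}. -/

import Mathlib

/-- The set `η_ℓ^j = {(S,y) ∈ V : |S ∩ K| = ℓ, |{y} ∩ K| = j}`. -/
def etaSet (N r : ℕ) (K : Finset (Fin N)) (l j : ℕ) :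
    Finset {p : Finset (Fin N) × Fin N // p.1.card = r ∧ p.2 ∉ p.1} :=
  Finset.univ.filter (fun p => (p.val.1 ∩ K).card = l ∧ ({p.val.2} ∩ K).card = j)

/-- The normalized uniform superposition `|η_ℓ^j⟩`. -/
noncomputable def etaVec (N r : ℕ) (K : Finset (Fin N)) (l j : ℕ) :
    {p : Finset (Fin N) × Fin N // p.1.card = r ∧ p.2 ∉ p.1} → ℂ :=
  fun p => if p ∈ etaSet N r K l j
    then ((1 / Real.sqrt ((etaSet N r K l j).card) : ℝ) : ℂ) else 0

/-- `|α_S⟩ = (N-r)^{-1/2} ∑_{y∉S} |S,y⟩`. -/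
noncomputable def alphaVec (N r : ℕ) (S : Finset (Fin N)) :
    {p : Finset (Fin N) × Fin N // p.1.card = r ∧ p.2 ∉ p.1} → ℂ :=
  fun p => if p.val.1 = S then ((1 / Real.sqrt (N - r) : ℝ) : ℂ) else 0

/-- The operator `U_α = 2 ∑_S |α_S⟩⟨α_S| - I`. -/
noncomputable def Ualpha (N r : ℕ) :
    Matrix {p : Finset (Fin N) × Fin N // p.1.card = r ∧ p.2 ∉ p.1}
      {p : Finset (Fin N) × Fin N // p.1.card = r ∧ p.2 ∉ p.1} ℂ :=
  (2 : ℂ) • (∑ S ∈ Finset.univ.filter (fun S : Finset (Fin N) => S.card = r),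
      Matrix.vecMulVec (alphaVec N r S) (star (alphaVec N r S))) - 1

/-- The index set of valid pairs `(ℓ,j)`, excluding `(k,1)`. -/
def pairSet (k : ℕ) : Finset (ℕ × ℕ) :=
  (Finset.range (k + 1) ×ˢ Finset.range 2).filter (fun q => ¬(q.1 = k ∧ q.2 = 1))

/-- The matrix element `⟨ℓ',j'|u_α|ℓ,j⟩`. -/
noncomputable def uAlphaEntry (N r k : ℕ) (l j l' j' : ℕ) : ℝ :=
  (-1 : ℝ) ^ j * (1 - 2 * ((k : ℝ) - l) / ((N : ℝ) - r))
      * (if l = l' ∧ j = j' then 1 else 0)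
    + 2 * Real.sqrt (((k : ℝ) - l) / ((N : ℝ) - r))
        * Real.sqrt (1 - ((k : ℝ) - l) / ((N : ℝ) - r))
        * (if l = l' ∧ 1 - j = j' then 1 else 0)

/-! `U_α` replaces the amplitude at `(S, y)` by `2/(N - r)` times the total amplitude on the fibre
`{(S, y') : y' ∉ S}` minus itself. The vector `|η_ℓ^j⟩` is constant on its support, and the fibre
over a set `S` with `|S ∩ K| = ℓ` meets `η_ℓ^1` in `k - ℓ` points and `η_ℓ^0` in
`N - r - (k - ℓ)` points (and misses every other `η`). So `U_α|η_ℓ^j⟩` is a combination of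
`|η_ℓ^0⟩` and `|η_ℓ^1⟩`, and double counting, `|η_ℓ^j| = #{S : |S ∩ K| = ℓ} · (fibre size)`,
turns the normalisations into the square roots of `u_α`. -/

open scoped Finset Matrix

abbrev V (N r : ℕ) := {p : Finset (Fin N) × Fin N // p.1.card = r ∧ p.2 ∉ p.1}

variable {N r k : ℕ} {K : Finset (Fin N)}

lemma lt_of_V (p : V N r) : r < N := by
  have := Finset.card_lt_card (Finset.ssubset_iff_subset_ne.2 ⟨Finset.subset_univ p.1.1,
    fun h => p.2.2 (h ▸ Finset.mem_univ _)⟩)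
  simpa [p.2.1] using this

def V.label (K : Finset (Fin N)) (p : V N r) : ℕ × ℕ := ((p.1.1 ∩ K).card, ({p.1.2} ∩ K).card)

lemma V.mem_etaSet_iff {l j : ℕ} (p : V N r) : p ∈ etaSet N r K l j ↔ p.label K = (l, j) := by
  simp [etaSet, V.label]

lemma V.label_snd_le_one (p : V N r) : (p.label K).2 ≤ 1 := Finset.card_singleton_inter

lemma V.label_mem_pairSet (hK : K.card = k) (p : V N r) : p.label K ∈ pairSet k := by
  have hl : (p.1.1 ∩ K).card ≤ k := hK ▸ Finset.card_le_card Finset.inter_subset_right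
  have hj : ({p.1.2} ∩ K).card ≤ 1 := p.label_snd_le_one
  simp only [pairSet, V.label, Finset.mem_filter, Finset.mem_product, Finset.mem_range]
  refine ⟨⟨by omega, by omega⟩, fun ⟨hlk, hj1⟩ => p.2.2 ?_⟩
  have hKS : K ⊆ p.1.1 := Finset.inter_eq_right.1
    (Finset.eq_of_subset_of_card_le Finset.inter_subset_right (by omega))
  refine hKS (by_contra fun hy => ?_)
  simp [hy] at hj1

lemma etaVec_apply {l j : ℕ} (p : V N r) :
    etaVec N r K l j p
      = if p.label K = (l, j) then ((1 / √((etaSet N r K l j).card) : ℝ) : ℂ) else 0 := by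
  simp only [etaVec, V.mem_etaSet_iff]

lemma Ualpha_apply (p q : V N r) :
    Ualpha N r p q = (if q.1.1 = p.1.1 then ((2 / ((N : ℝ) - r) : ℝ) : ℂ) else 0)
      - if p = q then 1 else 0 := by
  have hD : (0 : ℝ) ≤ N - r := by linarith [(by exact_mod_cast (lt_of_V p).le : (r : ℝ) ≤ N)]
  have hsq : ((1 / √((N : ℝ) - r) : ℝ) : ℂ) * ((1 / √((N : ℝ) - r) : ℝ) : ℂ)
      = ((1 / ((N : ℝ) - r) : ℝ) : ℂ) := by
    rw [← Complex.ofReal_mul, div_mul_div_comm, one_mul, Real.mul_self_sqrt hD]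
  simp only [Ualpha, Matrix.sub_apply, Matrix.smul_apply, Matrix.sum_apply,
    Matrix.vecMulVec_apply, Matrix.one_apply, smul_eq_mul, Pi.star_apply, alphaVec]
  rw [Finset.sum_eq_single_of_mem p.1.1 (by simp [p.2.1]) (fun S _ h => by simp [Ne.symm h])]
  split_ifs <;> simp_all [div_eq_mul_inv]

lemma Ualpha_mulVec_apply (v : V N r → ℂ) (p : V N r) :
    (Ualpha N r *ᵥ v) p
      = ((2 / ((N : ℝ) - r) : ℝ) : ℂ) * ∑ q with q.1.1 = p.1.1, v q - v p := by
  simp only [Matrix.mulVec, dotProduct, Ualpha_apply, sub_mul, Finset.sum_sub_distrib, ite_mul,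
    zero_mul, one_mul, Finset.sum_ite_eq, Finset.mem_univ, if_true, Finset.mul_sum,
    Finset.sum_filter, mul_ite, mul_zero]

/-- `typeWeight (N - r) (k - ℓ) j` counts the `y ∉ S` with `y ∈ K ↔ j = 1` when `|S ∩ K| = ℓ`. -/
def typeWeight (D t : ℝ) (j : ℕ) : ℝ := if j = 1 then t else D - t

lemma card_compl_filter_card_singleton_inter (hK : K.card = k) {S : Finset (Fin N)}
    (hS : S.card = r) {j : ℕ} (hj : j ≤ 1) :
    (#{y ∈ Sᶜ | ({y} ∩ K).card = j} : ℝ) = typeWeight (N - r) (k - (S ∩ K).card) j := by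
  interval_cases j
  · have hSK : ({y ∈ Sᶜ | ({y} ∩ K).card = 0} : Finset (Fin N)) = (S ∪ K)ᶜ := by
      ext; simp [Finset.singleton_inter, apply_ite Finset.card]
    have hcompl : ((S ∪ K)ᶜ.card : ℝ) + (S ∪ K).card = N := by
      exact_mod_cast (Finset.card_compl_add_card (S ∪ K)).trans (Fintype.card_fin N)
    have hunion : ((S ∪ K).card : ℝ) + (S ∩ K).card = r + k := by
      exact_mod_cast hS ▸ hK ▸ Finset.card_union_add_card_inter S K
    rw [hSK, typeWeight, if_neg zero_ne_one]
    linarith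
  · have hKS : ({y ∈ Sᶜ | ({y} ∩ K).card = 1} : Finset (Fin N)) = K \ S := by
      ext; simp [Finset.singleton_inter, apply_ite Finset.card, and_comm]
    have hdiff : ((K \ S).card : ℝ) + (S ∩ K).card = k := by
      exact_mod_cast hK ▸ Finset.inter_comm K S ▸ Finset.card_sdiff_add_card_inter K S
    rw [hKS, typeWeight, if_pos rfl]
    linarith

lemma card_filter_etaSet_fst_eq {l j : ℕ} {S : Finset (Fin N)} (hS : S.card = r) :
    #{q ∈ etaSet N r K l j | q.1.1 = S}
      = if (S ∩ K).card = l then #{y ∈ Sᶜ | ({y} ∩ K).card = j} else 0 := by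
  split_ifs with hl
  · refine Finset.card_bij (fun q _ => q.1.2) (fun q hq => ?_) (fun q₁ hq₁ q₂ hq₂ h => ?_)
      (fun y hy => ?_)
    · simp only [etaSet, Finset.mem_filter, Finset.mem_univ, true_and] at hq
      simp [← hq.2, hq.1.2, q.2.2]
    · simp only [etaSet, Finset.mem_filter, Finset.mem_univ, true_and] at hq₁ hq₂
      exact Subtype.ext (Prod.ext (hq₁.2.trans hq₂.2.symm) h)
    · simp only [Finset.mem_filter, Finset.mem_compl] at hy
      exact ⟨⟨(S, y), hS, hy.1⟩, by simp [etaSet, hl, hy.2], rfl⟩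
  · rw [Finset.card_eq_zero, Finset.filter_eq_empty_iff]
    rintro q hq rfl
    exact hl (Finset.mem_filter.1 hq).2.1

lemma card_filter_etaSet_fst (hK : K.card = k) {l j : ℕ} (hj : j ≤ 1) {S : Finset (Fin N)}
    (hS : S.card = r) :
    (#{q ∈ etaSet N r K l j | q.1.1 = S} : ℝ)
      = if (S ∩ K).card = l then typeWeight (N - r) (k - l) j else 0 := by
  rw [card_filter_etaSet_fst_eq hS]
  split_ifs with hl
  · rw [card_compl_filter_card_singleton_inter hK hS hj, hl]
  · simp

lemma card_etaSet (hK : K.card = k) {l j : ℕ} (hj : j ≤ 1) :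
    (#(etaSet N r K l j) : ℝ)
      = #{S : Finset (Fin N) | S.card = r ∧ (S ∩ K).card = l} * typeWeight (N - r) (k - l) j := by
  rw [Finset.card_eq_sum_card_fiberwise (f := fun q => q.1.1)
    (t := {S : Finset (Fin N) | S.card = r ∧ (S ∩ K).card = l})
    (fun q hq => by simpa [etaSet, q.2.1] using (Finset.mem_filter.1 hq).2.1)]
  push_cast
  rw [Finset.sum_congr rfl fun S hS => card_filter_etaSet_fst hK hj (Finset.mem_filter.1 hS).2.1,
    Finset.sum_congr rfl fun S hS => if_pos (Finset.mem_filter.1 hS).2.2]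
  simp

lemma sum_filter_fst_etaVec {l j : ℕ} (S : Finset (Fin N)) :
    ∑ q with q.1.1 = S, etaVec N r K l j q
      = ((1 / √((etaSet N r K l j).card) * #{q ∈ etaSet N r K l j | q.1.1 = S} : ℝ) : ℂ) := by
  simp only [etaVec, Finset.sum_ite_mem, Finset.sum_const, nsmul_eq_mul]
  push_cast
  rw [mul_comm, Finset.inter_comm, Finset.inter_filter, Finset.inter_univ]

lemma sum_pairSet_smul_etaVec_apply (hK : K.card = k) (a : ℕ × ℕ → ℝ) (p : V N r) :
    (∑ q ∈ pairSet k, (a q : ℂ) • etaVec N r K q.1 q.2) p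
      = ((a (p.label K) * (1 / √((etaSet N r K (p.label K).1 (p.label K).2).card)) : ℝ) : ℂ) := by
  simp only [Finset.sum_apply, Pi.smul_apply, etaVec_apply, smul_eq_mul, mul_ite, mul_zero,
    Prod.mk.eta, Finset.sum_ite_eq, if_pos (p.label_mem_pairSet hK), Complex.ofReal_mul]

lemma two_div_mul_mul_inv_sqrt {D n a b : ℝ} (hD : 0 < D) (hn : 0 < n) (hb : 0 < b) :
    2 / D * a * (√(n * a))⁻¹ = 2 * (√a / √D) * (√b / √D) * (√(n * b))⁻¹ := by
  calc 2 / D * a * (√(n * a))⁻¹ = 2 / D * (a / √a) / √n := by rw [Real.sqrt_mul hn.le]; ring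
    _ = 2 / D * √a / √n := by rw [Real.div_sqrt]
    _ = 2 * (√a / √D) * (√b / √D) * (√(n * b))⁻¹ := by
      rw [Real.sqrt_mul hn.le]
      field_simp
      rw [Real.sq_sqrt hD.le]
      ring

lemma two_div_mul_typeWeight_sub_eq_uAlphaEntry {n : ℝ} (hn : 0 < n) (hrN : r < N)
    {l j J : ℕ} (hj : j ≤ 1) (hJ : J ≤ 1) (hw : 0 < typeWeight (N - r) (k - l) J) :
    2 / ((N : ℝ) - r) * typeWeight (N - r) (k - l) j * (1 / √(n * typeWeight (N - r) (k - l) j))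
      - (if J = j then 1 / √(n * typeWeight (N - r) (k - l) j) else 0)
      = uAlphaEntry N r k l j l J * (1 / √(n * typeWeight (N - r) (k - l) J)) := by
  have hD : (0 : ℝ) < N - r := by linarith [(by exact_mod_cast hrN : (r : ℝ) < N)]
  simp only [uAlphaEntry, true_and]
  set D : ℝ := N - r
  set t : ℝ := k - l
  have h1 : 1 - t / D = (D - t) / D := by field_simp
  rw [h1, Real.sqrt_div' _ hD.le, Real.sqrt_div' _ hD.le]
  interval_cases j <;> interval_cases J <;> simp only [typeWeight] at hw ⊢ <;> norm_num at hw ⊢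
  · field_simp; ring
  · rw [mul_right_comm 2]; exact two_div_mul_mul_inv_sqrt hD hn hw
  · exact two_div_mul_mul_inv_sqrt hD hn (sub_pos.2 hw)
  · field_simp

lemma Ualpha_mulVec_etaVec_apply_eq_ite (hK : K.card = k) {l j : ℕ} (hj : j ≤ 1) (p : V N r) :
    (Ualpha N r *ᵥ etaVec N r K l j) p
      = ((2 / ((N : ℝ) - r) * (if (p.1.1 ∩ K).card = l then typeWeight (N - r) (k - l) j else 0)
            * (1 / √((etaSet N r K l j).card))
          - if p.label K = (l, j) then 1 / √((etaSet N r K l j).card) else 0 : ℝ) : ℂ) := by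
  rw [Ualpha_mulVec_apply, sum_filter_fst_etaVec, card_filter_etaSet_fst hK hj p.2.1, etaVec_apply]
  push_cast [apply_ite Complex.ofReal]
  ring

lemma two_div_mul_typeWeight_sub_eq_uAlphaEntry_of_label (hK : K.card = k) {l j J : ℕ}
    (hj : j ≤ 1) (p : V N r) (hp : p.label K = (l, J)) :
    2 / ((N : ℝ) - r) * typeWeight (N - r) (k - l) j * (1 / √((etaSet N r K l j).card))
      - (if J = j then 1 / √((etaSet N r K l j).card) else 0)
      = uAlphaEntry N r k l j l J * (1 / √((etaSet N r K l J).card)) := by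
  have hl : (p.1.1 ∩ K).card = l := congrArg Prod.fst hp
  have hJ : J ≤ 1 := by simpa [hp] using V.label_snd_le_one (K := K) p
  set n : ℝ := ((#{S : Finset (Fin N) | S.card = r ∧ (S ∩ K).card = l} : ℕ) : ℝ)
  have hn : 0 < n := Nat.cast_pos.2 (Finset.card_pos.2 ⟨p.1.1, by simp [p.2.1, hl]⟩)
  have hw : 0 < typeWeight (N - r) (k - l) J := by
    have hpos : (0 : ℝ) < (etaSet N r K l J).card :=
      Nat.cast_pos.2 (Finset.card_pos.2 ⟨p, (V.mem_etaSet_iff p).2 hp⟩)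
    rw [card_etaSet hK hJ] at hpos
    exact pos_of_mul_pos_right hpos hn.le
  rw [card_etaSet hK hj, card_etaSet hK hJ]
  exact two_div_mul_typeWeight_sub_eq_uAlphaEntry hn (lt_of_V p) hj hJ hw

lemma Ualpha_mulVec_etaVec_apply (hK : K.card = k) {l j : ℕ} (hj : j ≤ 1) (p : V N r) :
    (Ualpha N r *ᵥ etaVec N r K l j) p
      = ((uAlphaEntry N r k l j (p.label K).1 (p.label K).2
          * (1 / √((etaSet N r K (p.label K).1 (p.label K).2).card)) : ℝ) : ℂ) := by
  rw [Ualpha_mulVec_etaVec_apply_eq_ite hK hj]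
  rcases hp : p.label K with ⟨L, J⟩
  have hL : (p.1.1 ∩ K).card = L := congrArg Prod.fst hp
  congr 1
  by_cases hLl : L = l
  · subst hLl
    simpa [hL] using two_div_mul_typeWeight_sub_eq_uAlphaEntry_of_label hK hj p hp
  · simp [uAlphaEntry, hL, hLl, Ne.symm hLl]

theorem stmt11_general (N r k : ℕ) (K : Finset (Fin N)) (hK : K.card = k) :
    ∀ q ∈ pairSet k,
      (Ualpha N r).mulVec (etaVec N r K q.1 q.2)
        = ∑ q' ∈ pairSet k,
            ((uAlphaEntry N r k q.1 q.2 q'.1 q'.2 : ℝ) : ℂ) • etaVec N r K q'.1 q'.2 := by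
  rintro ⟨l, j⟩ hq
  have hj : j ≤ 1 := by
    simp only [pairSet, Finset.mem_filter, Finset.mem_product, Finset.mem_range] at hq
    omega
  funext p
  rw [Ualpha_mulVec_etaVec_apply hK hj, sum_pairSet_smul_etaVec_apply hK]

/-- The span of the `2k+1` vectors `|η_ℓ^j⟩` is invariant under `U_α`, which
acts on them by the matrix `u_α`:
`U_α|η_ℓ^j⟩ = ∑_{ℓ',j'} ⟨ℓ',j'|u_α|ℓ,j⟩ |η_{ℓ'}^{j'}⟩`. -/
theorem stmt11 (N r k : ℕ) (hk : 0 < k) (hkr : k ≤ r) (hkN : k < N - r)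
    (K : Finset (Fin N)) (hK : K.card = k) :
    ∀ q ∈ pairSet k,
      (Ualpha N r).mulVec (etaVec N r K q.1 q.2)
        = ∑ q' ∈ pairSet k,
            ((uAlphaEntry N r k q.1 q.2 q'.1 q'.2 : ℝ) : ℂ) • etaVec N r K q'.1 q'.2 :=
  stmt11_general N r k K hK
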